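/- Let n ≥ 3 and S = {f, r, r^{n-1}} in D_n. Then λ₂(D_n, S) = ⌊n/2⌋ if 4 divides n, and λ₂(D_n, S) = ⌊n/2⌋ + 1 if 4 does not divide n. -/

import Mathlib

/-!
The word length over `{f, r, r⁻¹}` is explicit: `rᵐ` has length `|m|` and `f rᵐ` has length
`|m| + 1`, where `|m|` is the distance from `m` to `0` in `ℤ/n`; the lower bound holds because
this function grows by at most one under left multiplication by a generator. The products `s s'`
are `1`, `r^{±2}` or the reflections `f r^{±1}`, and conjugation keeps rotations at the same length
and sends `f r^{±1}` to the reflections `f r^c` with `c` odd. The maximum is attained at the odd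
`c` nearest to `n / 2`, which is `n / 2` itself unless `4 ∣ n`, when it is at distance `n / 2 - 1`
from `0`.
-/

open DihedralGroup

/-- The word length of `g` with respect to a generating set `S`: the minimal
number of letters of `S` needed to write `g` as a product. -/
noncomputable def wordLength {G : Type*} [Group G] (S : Set G) (g : G) : ℕ :=
  sInf {k | ∃ l : List G, (∀ x ∈ l, x ∈ S) ∧ l.prod = g ∧ l.length = k}

section WordLength

variable {G : Type*} [Group G] {S : Set G}

theorem wordLength_le_length {l : List G} (hl : ∀ x ∈ l, x ∈ S) :
    wordLength S l.prod ≤ l.length :=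
  Nat.sInf_le ⟨l, hl, rfl, rfl⟩

theorem le_length_of_mul_le_succ {φ : G → ℕ} (h1 : φ 1 = 0)
    (hS : ∀ s ∈ S, ∀ x, φ (s * x) ≤ φ x + 1) {l : List G} (hl : ∀ x ∈ l, x ∈ S) :
    φ l.prod ≤ l.length := by
  induction l with
  | nil => simp [h1]
  | cons a t ih =>
    rw [List.forall_mem_cons] at hl
    rw [List.prod_cons, List.length_cons]
    exact (hS a hl.1 _).trans (Nat.succ_le_succ (ih hl.2))

theorem le_wordLength {φ : G → ℕ} (h1 : φ 1 = 0) (hS : ∀ s ∈ S, ∀ x, φ (s * x) ≤ φ x + 1)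
    {g : G} (hg : ∃ l : List G, (∀ x ∈ l, x ∈ S) ∧ l.prod = g) : φ g ≤ wordLength S g := by
  obtain ⟨l, hl, rfl⟩ := hg
  refine le_csInf ⟨_, l, hl, rfl, rfl⟩ ?_
  rintro k ⟨l', hl', hprod, rfl⟩
  exact hprod ▸ le_length_of_mul_le_succ h1 hS hl'

end WordLength

namespace ZMod

variable {n : ℕ}

theorem natAbs_valMinAbs_add_le_add (a b : ZMod n) :
    (a + b).valMinAbs.natAbs ≤ a.valMinAbs.natAbs + b.valMinAbs.natAbs :=
  (natAbs_valMinAbs_add_le a b).trans (Int.natAbs_add_le _ _)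

theorem natAbs_valMinAbs_one_le [NeZero n] : (1 : ZMod n).valMinAbs.natAbs ≤ 1 := by
  rw [valMinAbs_natAbs_eq_min, val_one_eq_one_mod]
  exact (min_le_left _ _).trans (Nat.mod_le 1 n)

theorem odd_valMinAbs_one_add_two_mul (h2 : 2 ∣ n) (j : ZMod n) :
    Odd (1 + 2 * j).valMinAbs := by
  rw [← intCast_eq_one_iff_odd, ← map_intCast (castHom h2 (ZMod 2)), coe_valMinAbs]
  simp only [map_add, map_one, map_mul, map_ofNat]
  rw [show (2 : ZMod 2) = 0 from rfl, zero_mul, add_zero]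

theorem natAbs_valMinAbs_one_add_two_mul_lt [NeZero n] (h4 : 4 ∣ n) (j : ZMod n) :
    (1 + 2 * j).valMinAbs.natAbs < n / 2 := by
  have hodd := (odd_valMinAbs_one_add_two_mul (dvd_trans (by norm_num) h4) j).natAbs
  have hle := natAbs_valMinAbs_le (1 + 2 * j)
  rw [Nat.odd_iff] at hodd
  omega

end ZMod

namespace DihedralGroup

variable {n : ℕ}

def genSet (n : ℕ) : Set (DihedralGroup n) := {sr 0, r 1, r 1 ^ (n - 1)}

theorem r_one_pow_sub_one [NeZero n] : (r 1 : DihedralGroup n) ^ (n - 1) = r (-1) := by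
  rw [r_one_pow, Nat.cast_sub NeZero.one_le, ZMod.natCast_self, Nat.cast_one, zero_sub]

theorem mem_genSet [NeZero n] {g : DihedralGroup n} :
    g ∈ genSet n ↔ g = sr 0 ∨ g = r 1 ∨ g = r (-1) := by
  rw [genSet, r_one_pow_sub_one]
  rfl

def genLength : DihedralGroup n → ℕ
  | r m => m.valMinAbs.natAbs
  | sr m => m.valMinAbs.natAbs + 1

theorem genLength_one : genLength (1 : DihedralGroup n) = 0 := by
  rw [one_def]
  simp [genLength]

theorem genLength_mul_le [NeZero n] {s : DihedralGroup n} (hs : s ∈ genSet n)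
    (x : DihedralGroup n) : genLength (s * x) ≤ genLength x + 1 := by
  have h1 := ZMod.natAbs_valMinAbs_one_le (n := n)
  have h1' : (-1 : ZMod n).valMinAbs.natAbs ≤ 1 := by rwa [ZMod.natAbs_valMinAbs_neg]
  rcases mem_genSet.1 hs with rfl | rfl | rfl <;> rcases x with m | m <;>
    simp only [sr_mul_r, sr_mul_sr, r_mul_r, r_mul_sr, genLength, zero_add,
      sub_eq_add_neg, neg_neg, neg_zero, add_zero]
  · omega
  · omega
  · have := ZMod.natAbs_valMinAbs_add_le_add 1 m; omega
  · have := ZMod.natAbs_valMinAbs_add_le_add m (-1); omega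
  · have := ZMod.natAbs_valMinAbs_add_le_add (-1) m; omega
  · have := ZMod.natAbs_valMinAbs_add_le_add m 1; omega

theorem exists_mem_genSet_pow_eq_r [NeZero n] (m : ZMod n) :
    ∃ t ∈ genSet n, t ^ m.valMinAbs.natAbs = r m := by
  set k := m.valMinAbs.natAbs
  rcases Int.natAbs_eq m.valMinAbs with h | h
  · refine ⟨r 1, mem_genSet.2 (Or.inr (Or.inl rfl)), ?_⟩
    rw [r_one_pow]
    congr 1
    rw [← ZMod.coe_valMinAbs m, h, Int.cast_natCast]
  · refine ⟨r (-1), mem_genSet.2 (Or.inr (Or.inr rfl)), ?_⟩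
    rw [r_pow]
    congr 1
    rw [← ZMod.coe_valMinAbs m, h, Int.cast_neg, Int.cast_natCast, neg_one_mul]

theorem exists_word_length_eq_genLength [NeZero n] (g : DihedralGroup n) :
    ∃ l : List (DihedralGroup n), (∀ x ∈ l, x ∈ genSet n) ∧ l.prod = g ∧
      l.length = genLength g := by
  rcases g with m | m <;> obtain ⟨t, ht, hpow⟩ := exists_mem_genSet_pow_eq_r m
  · refine ⟨List.replicate m.valMinAbs.natAbs t, ?_, by rw [List.prod_replicate, hpow],
      List.length_replicate⟩
    intro x hx
    rwa [(List.mem_replicate.1 hx).2]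
  · refine ⟨sr 0 :: List.replicate m.valMinAbs.natAbs t, ?_, ?_, by simp [genLength]⟩
    · intro x hx
      rcases List.mem_cons.1 hx with rfl | hx
      · exact mem_genSet.2 (Or.inl rfl)
      · rwa [(List.mem_replicate.1 hx).2]
    · rw [List.prod_cons, List.prod_replicate, hpow, sr_mul_r, zero_add]

theorem wordLength_genSet [NeZero n] (g : DihedralGroup n) :
    wordLength (genSet n) g = genLength g := by
  obtain ⟨l, hl, rfl, hlen⟩ := exists_word_length_eq_genLength g
  exact le_antisymm (hlen ▸ wordLength_le_length hl)
    (le_wordLength genLength_one (fun _ => genLength_mul_le) ⟨l, hl, rfl⟩)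

theorem conj_r (g : DihedralGroup n) (c : ZMod n) :
    g⁻¹ * r c * g = r c ∨ g⁻¹ * r c * g = r (-c) := by
  rcases g with i | i
  · left
    rw [inv_r, r_mul_r, r_mul_r]
    congr 1
    ring
  · right
    rw [inv_sr, sr_mul_r, sr_mul_sr]
    congr 1
    ring

theorem exists_conj_sr_one_add_two_mul (g : DihedralGroup n) (j : ZMod n) :
    ∃ j', g⁻¹ * sr (1 + 2 * j) * g = sr (1 + 2 * j') := by
  rcases g with i | i
  · refine ⟨j + i, ?_⟩
    rw [inv_r, r_mul_sr, sr_mul_r]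
    congr 1
    ring
  · refine ⟨i - j - 1, ?_⟩
    rw [inv_sr, sr_mul_sr, r_mul_sr]
    congr 1
    ring

theorem mul_eq_r_or_sr_of_mem_genSet [NeZero n] {s s' : DihedralGroup n}
    (hs : s ∈ genSet n) (hs' : s' ∈ genSet n) :
    (∃ c : ZMod n, s * s' = r c ∧ c.valMinAbs.natAbs ≤ 2) ∨ ∃ j, s * s' = sr (1 + 2 * j) := by
  have h1 := ZMod.natAbs_valMinAbs_one_le (n := n)
  have h2 : (1 + 1 : ZMod n).valMinAbs.natAbs ≤ 2 :=
    (ZMod.natAbs_valMinAbs_add_le_add 1 1).trans (by omega)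
  rcases mem_genSet.1 hs with rfl | rfl | rfl <;> rcases mem_genSet.1 hs' with rfl | rfl | rfl <;>
    simp only [sr_mul_sr, sr_mul_r, r_mul_sr, r_mul_r]
  · exact Or.inl ⟨_, rfl, by simp⟩
  · exact Or.inr ⟨0, by ring_nf⟩
  · exact Or.inr ⟨-1, by ring_nf⟩
  · exact Or.inr ⟨-1, by ring_nf⟩
  · exact Or.inl ⟨_, rfl, h2⟩
  · exact Or.inl ⟨_, rfl, by simp⟩
  · exact Or.inr ⟨0, by ring_nf⟩
  · exact Or.inl ⟨_, rfl, by simp⟩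
  · exact Or.inl ⟨_, rfl, by rwa [← neg_add, ZMod.natAbs_valMinAbs_neg]⟩

theorem genLength_conj_r (g : DihedralGroup n) (c : ZMod n) :
    genLength (g⁻¹ * r c * g) = genLength (r c) := by
  rcases conj_r g c with h | h <;> rw [h]
  exact ZMod.natAbs_valMinAbs_neg c

theorem genLength_sr_one_add_two_mul_le [NeZero n] (j : ZMod n) :
    genLength (sr (1 + 2 * j)) ≤ if 4 ∣ n then n / 2 else n / 2 + 1 := by
  split_ifs with h4
  · exact ZMod.natAbs_valMinAbs_one_add_two_mul_lt h4 j
  · exact Nat.succ_le_succ (ZMod.natAbs_valMinAbs_le _)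

theorem genLength_conj_mul_le (hn : 3 ≤ n) {s s' : DihedralGroup n} (hs : s ∈ genSet n)
    (hs' : s' ∈ genSet n) (g : DihedralGroup n) :
    genLength (g⁻¹ * (s * s') * g) ≤ if 4 ∣ n then n / 2 else n / 2 + 1 := by
  have : NeZero n := ⟨by omega⟩
  rcases mul_eq_r_or_sr_of_mem_genSet hs hs' with ⟨c, hc, hc2⟩ | ⟨j, hj⟩
  · rw [hc, genLength_conj_r]
    exact hc2.trans (by split_ifs with h4 <;> omega)
  · obtain ⟨j', hj'⟩ := exists_conj_sr_one_add_two_mul g j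
    rw [hj, hj']
    exact genLength_sr_one_add_two_mul_le j'

theorem genLength_conj_sr_zero_mul_r_one {i : ℕ} (hi : 1 + 2 * i < n) :
    genLength ((r (i : ZMod n))⁻¹ * (sr 0 * r 1) * r (i : ZMod n)) =
      min (1 + 2 * i) (n - (1 + 2 * i)) + 1 := by
  have : NeZero n := ⟨by omega⟩
  have h : (r (i : ZMod n))⁻¹ * (sr 0 * r 1) * r (i : ZMod n) =
      sr ((1 + 2 * i : ℕ) : ZMod n) := by
    rw [inv_r, sr_mul_r, r_mul_sr, sr_mul_r]
    push_cast
    ring_nf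
  rw [h, genLength, ZMod.valMinAbs_natAbs_eq_min, ZMod.val_cast_of_lt hi]

theorem isGreatest_wordLength_conj_mul (hn : 3 ≤ n) :
    IsGreatest {k | ∃ g : DihedralGroup n, ∃ s ∈ genSet n, ∃ s' ∈ genSet n,
      k = wordLength (genSet n) (g⁻¹ * (s * s') * g)} (if 4 ∣ n then n / 2 else n / 2 + 1) := by
  have : NeZero n := ⟨by omega⟩
  simp only [wordLength_genSet]
  refine ⟨⟨r (n / 4 : ℕ), sr 0, mem_genSet.2 (Or.inl rfl), r 1,
    mem_genSet.2 (Or.inr (Or.inl rfl)), ?_⟩, ?_⟩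
  · rw [genLength_conj_sr_zero_mul_r_one (by omega)]
    split_ifs <;> omega
  · rintro k ⟨g, s, hs, s', hs', rfl⟩
    exact genLength_conj_mul_le hn hs hs' g

end DihedralGroup

theorem stmt16 (n : ℕ) (hn : 3 ≤ n) :
    letI S : Set (DihedralGroup n) := {sr 0, r 1, (r 1 : DihedralGroup n) ^ (n - 1)}
    letI Λ : Set ℕ := {k | ∃ g : DihedralGroup n, ∃ s ∈ S, ∃ s' ∈ S,
      k = wordLength S (g⁻¹ * (s * s') * g)}
    (4 ∣ n → IsGreatest Λ (n / 2)) ∧ (¬ 4 ∣ n → IsGreatest Λ (n / 2 + 1)) := by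
  have h := isGreatest_wordLength_conj_mul hn
  exact ⟨fun h4 => by rwa [if_pos h4] at h, fun h4 => by rwa [if_neg h4] at h⟩
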